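/- Let g : ℝ → ℝ be of class C⁴ and fix x ∈ ℝ. Then the mass-matrix combination satisfies (1/24)·(g(x−h) + 22·g(x) + g(x+h)) − (1/h)·∫_{x−h/2}^{x+h/2} g(ξ) dξ = O(h⁴) as h → 0⁺. -/

import Mathlib

/-!
Subtract from `g` its Taylor polynomial of order 4 at `x`. The defect of the rule is linear in the
function; it vanishes on `(ξ - x) ^ k` for `k ≤ 3` (the rule is exact on cubics) and equals
`17 / 240 * h ^ 4` on `(ξ - x) ^ 4`. On the Taylor remainder, which is `O((ξ - x) ^ 4)`, the defect
is at most twice the supremum of the remainder over `[x - h, x + h]`, hence `O(h ^ 4)`.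
-/

open Asymptotics Filter Set MeasureTheory Topology

noncomputable def massMatrixDefect (f : ℝ → ℝ) (x h : ℝ) : ℝ :=
  (1 / 24) * (f (x - h) + 22 * f x + f (x + h))
    - (1 / h) * ∫ ξ in (x - h / 2)..(x + h / 2), f ξ

section
variable {x h : ℝ}

lemma massMatrixDefect_add {f₁ f₂ : ℝ → ℝ}
    (hf₁ : IntervalIntegrable f₁ volume (x - h / 2) (x + h / 2))
    (hf₂ : IntervalIntegrable f₂ volume (x - h / 2) (x + h / 2)) :
    massMatrixDefect (fun ξ => f₁ ξ + f₂ ξ) x h =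
      massMatrixDefect f₁ x h + massMatrixDefect f₂ x h := by
  simp only [massMatrixDefect, intervalIntegral.integral_add hf₁ hf₂]
  ring

lemma massMatrixDefect_const_mul (c : ℝ) (f : ℝ → ℝ) :
    massMatrixDefect (fun ξ => c * f ξ) x h = c * massMatrixDefect f x h := by
  simp only [massMatrixDefect, intervalIntegral.integral_const_mul]
  ring

lemma massMatrixDefect_finset_sum {ι : Type*} (s : Finset ι) {f : ι → ℝ → ℝ}
    (hf : ∀ i ∈ s, IntervalIntegrable (f i) volume (x - h / 2) (x + h / 2)) :
    massMatrixDefect (fun ξ => ∑ i ∈ s, f i ξ) x h = ∑ i ∈ s, massMatrixDefect (f i) x h := by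
  simp only [massMatrixDefect, intervalIntegral.integral_finsetSum hf, Finset.sum_sub_distrib,
    ← Finset.mul_sum, Finset.sum_add_distrib]

lemma massMatrixDefect_sub_pow (k : ℕ) :
    massMatrixDefect (fun ξ => (ξ - x) ^ k) x h =
      ((-h) ^ k + 22 * 0 ^ k + h ^ k) / 24
        - (1 / h) * (((h / 2) ^ (k + 1) - (-(h / 2)) ^ (k + 1)) / (k + 1)) := by
  rw [massMatrixDefect, intervalIntegral.integral_comp_sub_right (fun t => t ^ k), integral_pow]
  simp only [sub_sub_cancel_left, add_sub_cancel_left, sub_self]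
  ring

lemma massMatrixDefect_sub_pow_of_lt_four {k : ℕ} (hk : k < 4) (hh : h ≠ 0) :
    massMatrixDefect (fun ξ => (ξ - x) ^ k) x h = 0 := by
  rw [massMatrixDefect_sub_pow]
  interval_cases k <;> field_simp <;> ring

lemma massMatrixDefect_sub_pow_four (hh : h ≠ 0) :
    massMatrixDefect (fun ξ => (ξ - x) ^ 4) x h = 17 / 240 * h ^ 4 := by
  rw [massMatrixDefect_sub_pow]
  field_simp
  ring

lemma abs_massMatrixDefect_le {f : ℝ → ℝ} {M : ℝ} (hh : 0 < h)
    (hf : ∀ ξ, |ξ - x| ≤ h → |f ξ| ≤ M) : |massMatrixDefect f x h| ≤ 2 * M := by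
  obtain ⟨hl₁, hu₁⟩ := abs_le.mp (hf (x - h) (by simp [abs_of_pos hh]))
  obtain ⟨hl₀, hu₀⟩ := abs_le.mp (hf x (by simp [hh.le]))
  obtain ⟨hl₂, hu₂⟩ := abs_le.mp (hf (x + h) (by simp [abs_of_pos hh]))
  have hint : |∫ ξ in (x - h / 2)..(x + h / 2), f ξ| ≤ M * h := by
    have := intervalIntegral.norm_integral_le_of_norm_le_const (f := f) (C := M)
      (a := x - h / 2) (b := x + h / 2) fun ξ hξ => by
        rw [uIoc_of_le (by linarith)] at hξ
        exact hf ξ (abs_le.mpr ⟨by linarith [hξ.1], by linarith [hξ.2]⟩)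
    rwa [Real.norm_eq_abs, show x + h / 2 - (x - h / 2) = h by ring, abs_of_pos hh] at this
  have hmean : |(1 / 24) * (f (x - h) + 22 * f x + f (x + h))| ≤ M := by
    rw [abs_le]
    constructor <;> linarith
  have haverage : |(1 / h) * ∫ ξ in (x - h / 2)..(x + h / 2), f ξ| ≤ M := by
    rw [abs_mul, abs_of_pos (one_div_pos.mpr hh)]
    calc 1 / h * |∫ ξ in (x - h / 2)..(x + h / 2), f ξ| ≤ 1 / h * (M * h) := by gcongr
      _ = M := by field_simp
  calc |massMatrixDefect f x h| ≤ M + M := (abs_sub _ _).trans (add_le_add hmean haverage)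
    _ = 2 * M := by ring

lemma isBigO_massMatrixDefect_of_isBigO {f : ℝ → ℝ} {n : ℕ}
    (hf : f =O[𝓝 x] fun ξ => (ξ - x) ^ n) :
    (fun h => massMatrixDefect f x h) =O[𝓝[>] 0] fun h => h ^ n := by
  obtain ⟨C, hC₀, hC⟩ := hf.exists_pos
  rw [IsBigOWith_def, Metric.eventually_nhds_iff] at hC
  obtain ⟨δ, hδ, hball⟩ := hC
  refine IsBigO.of_bound (2 * C) ?_
  filter_upwards [Ioo_mem_nhdsGT hδ] with h ⟨hh, hhδ⟩
  rw [Real.norm_eq_abs, norm_pow, Real.norm_eq_abs, abs_of_pos hh, mul_assoc]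
  refine abs_massMatrixDefect_le hh fun ξ hξ => ?_
  have hCξ := hball (y := ξ) (by rw [Real.dist_eq]; linarith)
  rw [Real.norm_eq_abs, norm_pow, Real.norm_eq_abs] at hCξ
  exact hCξ.trans (mul_le_mul_of_nonneg_left (pow_le_pow_left₀ (abs_nonneg _) hξ n) hC₀.le)

lemma isBigO_massMatrixDefect_sub_pow {k : ℕ} (hk : k ≤ 4) :
    (fun h => massMatrixDefect (fun ξ => (ξ - x) ^ k) x h) =O[𝓝[>] 0] fun h => h ^ 4 := by
  have hne : ∀ᶠ h in 𝓝[>] (0 : ℝ), h ≠ 0 := eventually_mem_nhdsWithin.mono fun h hh => hh.ne'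
  rcases hk.lt_or_eq with hk | rfl
  · exact (isBigO_zero _ _).congr'
      (hne.mono fun h hh => (massMatrixDefect_sub_pow_of_lt_four hk hh).symm) EventuallyEq.rfl
  · exact ((isBigO_refl _ _).const_mul_left (17 / 240)).congr'
      (hne.mono fun h hh => (massMatrixDefect_sub_pow_four hh).symm) EventuallyEq.rfl

lemma isBigO_massMatrixDefect_quartic (c : ℕ → ℝ) :
    (fun h => massMatrixDefect (fun ξ => ∑ k ∈ Finset.range 5, c k * (ξ - x) ^ k) x h)
      =O[𝓝[>] 0] fun h => h ^ 4 := by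
  have hsum : ∀ h, massMatrixDefect (fun ξ => ∑ k ∈ Finset.range 5, c k * (ξ - x) ^ k) x h =
      ∑ k ∈ Finset.range 5, c k * massMatrixDefect (fun ξ => (ξ - x) ^ k) x h := fun h => by
    rw [massMatrixDefect_finset_sum _ fun k _ =>
      (by fun_prop : Continuous _).intervalIntegrable _ _]
    simp only [massMatrixDefect_const_mul]
  simp only [hsum]
  exact IsBigO.fun_sum fun k hk =>
    (isBigO_massMatrixDefect_sub_pow (Finset.mem_range_succ_iff.mp hk)).const_mul_left _

end

lemma isBigO_sub_taylor_sum {f : ℝ → ℝ} {n : ℕ} (hf : ContDiff ℝ n f) (x : ℝ) :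
    (fun ξ => f ξ - ∑ k ∈ Finset.range (n + 1), iteratedDeriv k f x / k.factorial * (ξ - x) ^ k)
      =O[𝓝 x] fun ξ => (ξ - x) ^ n := by
  refine (taylor_isLittleO_univ hf).isBigO.congr_left fun ξ => ?_
  rw [taylor_within_apply]
  congr 1
  refine Finset.sum_congr rfl fun k _ => ?_
  rw [smul_eq_mul, iteratedDerivWithin_univ]
  ring

theorem quick_mass_matrix_cell_average (g : ℝ → ℝ) (hg : ContDiff ℝ 4 g) (x : ℝ) :
    (fun h : ℝ => (1 / 24) * (g (x - h) + 22 * g x + g (x + h))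
        - (1 / h) * (∫ ξ in (x - h / 2)..(x + h / 2), g ξ))
      =O[nhdsWithin 0 (Set.Ioi 0)] fun h : ℝ => h ^ 4 := by
  set P : ℝ → ℝ := fun ξ => ∑ k ∈ Finset.range 5, iteratedDeriv k g x / k.factorial * (ξ - x) ^ k
  have hP : Continuous P := by fun_prop
  have hsplit : ∀ h, massMatrixDefect g x h
      = massMatrixDefect (fun ξ => g ξ - P ξ) x h + massMatrixDefect P x h := fun h => by
    simpa only [sub_add_cancel] using massMatrixDefect_add (x := x) (h := h)
      (f₁ := fun ξ => g ξ - P ξ) ((hg.continuous.sub hP).intervalIntegrable _ _)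
      (hP.intervalIntegrable _ _)
  show (fun h => massMatrixDefect g x h) =O[𝓝[>] 0] fun h => h ^ 4
  simpa only [hsplit] using (isBigO_massMatrixDefect_of_isBigO (isBigO_sub_taylor_sum hg x)).add
    (isBigO_massMatrixDefect_quartic _)
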